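/- arXiv:1411.0562 — 4 statements merged into one kernel-verified Lean document; each statement's English description precedes it below -/
import Mathlib

section
/- Let λ/μ be a skew diagram (a finite subset of ℤ × ℤ_{>0} satisfying: if nonempty there is j with (j,1) ∈ λ/μ, and if (i,j) ∉ λ/μ then either (i',j') ∉ λ/μ for all i' ≥ i, j' ≥ j, or (i',j') ∉ λ/μ for all i' ≤ i, j' ≤ j). If λ/μ contains a rectangle of size (2N+1) × 2 (i.e., there exist i, j such that (i+r, j), (i+r, j+1) ∈ λ/μ for all 0 ≤ r ≤ 2N), then there exists no skew tableau of shape λ/μ with values in the alphabet A = {1 < ... < N < 0 < N̄ < ... < 1̄} satisfying the rules (H) and (V). -/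
/-- The type-B alphabet `{1,...,N, 0, N̄,...,1̄}`. -/
abbrev Alp (N : ℕ) := Fin N ⊕ (Unit ⊕ Fin N)

/-- The position of a letter in the order `1 < ⋯ < N < 0 < N̄ < ⋯ < 1̄`. -/
def idx {N : ℕ} : Alp N → ℕ
  | Sum.inl i => i
  | Sum.inr (Sum.inl _) => N
  | Sum.inr (Sum.inr j) => 2 * N - j

/-- The letter `0` of the alphabet. -/
def zeroL {N : ℕ} : Alp N := Sum.inr (Sum.inl ())

/-- A skew diagram: a finite subset of `ℤ × ℤ_{>0}` such that if nonempty it meets column 1,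
and satisfying the convexity condition. -/
def IsSkewDiagram (D : Finset (ℤ × ℤ)) : Prop :=
  (∀ p ∈ D, 1 ≤ p.2) ∧
  (D.Nonempty → ∃ i : ℤ, (i, 1) ∈ D) ∧
  (∀ i j : ℤ, (i, j) ∉ D →
    (∀ i' j' : ℤ, i ≤ i' → j ≤ j' → (i', j') ∉ D) ∨
    (∀ i' j' : ℤ, i' ≤ i → j' ≤ j → (i', j') ∉ D))

/-- A skew tableau: the horizontal rule (H) and the vertical rule (V). -/
def IsTableau {N : ℕ} (D : Finset (ℤ × ℤ)) (T : ℤ × ℤ → Alp N) : Prop :=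
  (∀ i j : ℤ, (i, j) ∈ D → (i, j + 1) ∈ D →
      idx (T (i, j)) ≤ idx (T (i, j + 1)) ∧ ¬(T (i, j) = zeroL ∧ T (i, j + 1) = zeroL)) ∧
  (∀ i j : ℤ, (i, j) ∈ D → (i + 1, j) ∈ D →
      idx (T (i, j)) < idx (T (i + 1, j)) ∨ (T (i, j) = zeroL ∧ T (i + 1, j) = zeroL))

/-! Along a column the vertical rule forces the letters of the alphabet `1 < ⋯ < N < 0 < N̄ < ⋯ < 1̄`
to increase strictly, except that `0` may repeat. In a column of `2N + 1` boxes the `r`-th box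
therefore carries a letter of position at least `r` as long as `r ≤ N`, and dually, counting from the
bottom, at most `r`; so the middle box carries `0`. Two adjacent columns of height `2N + 1` would
put two `0`s side by side in a row, which the horizontal rule forbids. -/

lemma idx_le_two_mul {N : ℕ} (a : Alp N) : idx a ≤ 2 * N := by
  rcases a with i | _ | j
  · have := i.isLt; simp only [idx]; omega
  · simp only [idx]; omega
  · simp only [idx]; omega

lemma eq_zeroL_of_idx_eq {N : ℕ} {a : Alp N} (h : idx a = N) : a = zeroL := by
  rcases a with i | _ | j
  · have := i.isLt; simp only [idx] at h; omega
  · rfl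
  · have := j.isLt; simp only [idx] at h; omega

lemma le_apply_of_step_lt_or_eq {s : ℕ → ℕ} {n : ℕ}
    (hstep : ∀ r < n, s r < s (r + 1) ∨ s (r + 1) = n) : ∀ r ≤ n, r ≤ s r := by
  intro r
  induction r with
  | zero => intro _; exact Nat.zero_le _
  | succ r ih =>
    intro hr
    have := ih (by omega)
    rcases hstep r (by omega) with h | h <;> omega

lemma apply_middle_eq_of_step_lt_or_eq {s : ℕ → ℕ} {n : ℕ} (hs : ∀ r, s r ≤ 2 * n)
    (hstep : ∀ r < 2 * n, s r < s (r + 1) ∨ (s r = n ∧ s (r + 1) = n)) : s n = n := by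
  have hlow : n ≤ s n := by
    refine le_apply_of_step_lt_or_eq (fun r hr => ?_) n le_rfl
    rcases hstep r (by omega) with h | h
    · exact .inl h
    · exact .inr h.2
  -- the reflected sequence `r ↦ 2n - s (2n - r)` satisfies the same hypothesis
  have hhigh : n ≤ 2 * n - s (2 * n - n) := by
    refine le_apply_of_step_lt_or_eq (s := fun r => 2 * n - s (2 * n - r)) (fun r hr => ?_) n le_rfl
    have hsucc : 2 * n - r = 2 * n - (r + 1) + 1 := by omega
    have := hs (2 * n - r)
    rcases hstep (2 * n - (r + 1)) (by omega) with h | h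
    · left; rw [hsucc] at this ⊢; omega
    · right; simp only [h.1]; omega
  have hhalf : 2 * n - n = n := by omega
  rw [hhalf] at hhigh
  have := hs n
  omega

lemma IsTableau.eq_zeroL_of_column {N : ℕ} {D : Finset (ℤ × ℤ)} {T : ℤ × ℤ → Alp N}
    (hT : IsTableau D T) {i c : ℤ} (hcol : ∀ r : ℤ, 0 ≤ r → r ≤ 2 * N → (i + r, c) ∈ D) :
    T (i + N, c) = zeroL := by
  refine eq_zeroL_of_idx_eq (apply_middle_eq_of_step_lt_or_eq (s := fun r => idx (T (i + r, c)))
    (fun r => idx_le_two_mul _) (fun r hr => ?_))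
  have hmem := hcol r (by positivity) (by omega)
  have hmem' := hcol (r + 1) (by positivity) (by omega)
  rw [← add_assoc] at hmem'
  push_cast
  rw [← add_assoc]
  rcases hT.2 _ _ hmem hmem' with h | ⟨h, h'⟩
  · exact .inl h
  · exact .inr ⟨by rw [h]; rfl, by rw [h']; rfl⟩

theorem stmt6_general (N : ℕ) (D : Finset (ℤ × ℤ))
    (hrect : ∃ i j : ℤ, ∀ r : ℤ, 0 ≤ r → r ≤ 2 * N →
      (i + r, j) ∈ D ∧ (i + r, j + 1) ∈ D) :
    ¬ ∃ T : ℤ × ℤ → Alp N, IsTableau D T := by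
  rintro ⟨T, hT⟩
  obtain ⟨i, j, hrect⟩ := hrect
  have hleft := hT.eq_zeroL_of_column fun r h0 h2 => (hrect r h0 h2).1
  have hright := hT.eq_zeroL_of_column fun r h0 h2 => (hrect r h0 h2).2
  have hmid := hrect N (by positivity) (by omega)
  exact (hT.1 _ _ hmid.1 hmid.2).2 ⟨hleft, hright⟩

theorem stmt6 (N : ℕ) (hN : 1 ≤ N) (D : Finset (ℤ × ℤ)) (hD : IsSkewDiagram D)
    (hrect : ∃ i j : ℤ, ∀ r : ℤ, 0 ≤ r → r ≤ 2 * N →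
      (i + r, j) ∈ D ∧ (i + r, j + 1) ∈ D) :
    ¬ ∃ T : ℤ × ℤ → Alp N, IsTableau D T :=
  stmt6_general N D hrect
end

section
/- Let (i,k) ∈ X with i < N and let p ∈ P_{i,k} be given by a pair (a, ā) with a ∈ P_{N, k-(2N-2i-1)} and ā ∈ P_{N, k+(2N-2i-1)}, and the joining condition a_N - ā_N = (0, y) with y > 0. Write a = ((x_r, y_r)), ā = ((x̄_r, ȳ_r)). Define S_p = {r : 1 ≤ r ≤ N, y_r - y_{r-1} < 0} and S̄_p = {r̄ : 1 ≤ r ≤ N, ȳ_r - ȳ_{r-1} > 0}. Then #S_p + #S̄_p ≤ i. -/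
/-!
Every step `s` of a half path satisfies `s + 4·[s < 0] ≤ 2`, except the last one, where
`s = ±(1 + ε)` gives `s + 4·[s < 0] ≤ 3 - ε`. Summing over the steps, the height gained by a half
path plus four times its number of down steps is at most `2N + 1 - ε`. Applying this to `a` and to
the reflection of `ā` (whose down steps are the up steps of `ā`) and adding, the starting heights
`k + 2i` and `k + 4N - 2i - 2` together with `ā_N < a_N` give `4 (#S_p + #S̄_p) < 4i + 4 - 2ε`.
-/

open Finset

/-- A "half path" in `𝒫_{N,k}`: the sequence of heights `y_0, …, y_N` of a path, with
`y_0 = k + 2N - 1`, steps `±2` for `0 ≤ j ≤ N-2`, and a final step `±(1+ε)`. -/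
structure HalfPath (N : ℕ) (ε : ℝ) (k : ℤ) where
  y : ℕ → ℝ
  h0 : y 0 = (k : ℝ) + 2 * N - 1
  hstep : ∀ j : ℕ, j + 1 ≤ N - 1 → y (j + 1) - y j = 2 ∨ y (j + 1) - y j = -2
  hlast : y N - y (N - 1) = 1 + ε ∨ y N - y (N - 1) = -(1 + ε)

theorem Finset.sum_Icc_one_sub_pred {M : Type*} [AddCommGroup M] (y : ℕ → M) (n : ℕ) :
    ∑ r ∈ Icc 1 n, (y r - y (r - 1)) = y n - y 0 := by
  induction n with
  | zero => simp
  | succ n ih => rw [sum_Icc_succ_top (by omega), ih]; simp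

theorem Nat.card_one_le_and_le_and_eq_card_filter (N : ℕ) (P : ℕ → Prop) [DecidablePred P] :
    Nat.card {r : ℕ // 1 ≤ r ∧ r ≤ N ∧ P r} = #{r ∈ Icc 1 N | P r} := by
  rw [← Set.ncard_coe_finset, ← Nat.card_coe_set_eq]
  congr
  ext r
  simp [and_assoc]

namespace HalfPath

variable {N : ℕ} {ε : ℝ} {k : ℤ}

noncomputable def downSteps (p : HalfPath N ε k) : Finset ℕ :=
  {r ∈ Icc 1 N | p.y r - p.y (r - 1) < 0}

noncomputable def upSteps (p : HalfPath N ε k) : Finset ℕ :=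
  {r ∈ Icc 1 N | 0 < p.y r - p.y (r - 1)}

def reflect (p : HalfPath N ε k) : HalfPath N ε (2 - 4 * N - k) where
  y n := -p.y n
  h0 := by rw [p.h0]; push_cast; ring
  hstep j hj := by rcases p.hstep j hj with h | h <;> [right; left] <;> linarith
  hlast := by rcases p.hlast with h | h <;> [right; left] <;> linarith

theorem reflect_downSteps (p : HalfPath N ε k) : p.reflect.downSteps = p.upSteps := by
  simp [downSteps, upSteps, reflect]

theorem step_add_four_mul_ite_le (p : HalfPath N ε k) (hε : ε ≤ 1) {r : ℕ} (hr : r ∈ Icc 1 N) :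
    p.y r - p.y (r - 1) + 4 * (if p.y r - p.y (r - 1) < 0 then 1 else 0) ≤
      2 + if r = N then 1 - ε else 0 := by
  obtain ⟨hr1, hrN⟩ := mem_Icc.mp hr
  rcases hrN.eq_or_lt with rfl | hrN
  · rw [if_pos rfl]
    rcases p.hlast with h | h <;> rw [h] <;> split_ifs <;> linarith
  · rw [if_neg hrN.ne]
    have h := p.hstep (r - 1) (by omega)
    rw [Nat.sub_add_cancel hr1] at h
    rcases h with h | h <;> rw [h] <;> split_ifs <;> linarith

theorem sub_add_four_mul_card_downSteps_le (p : HalfPath N ε k) (hε : ε ≤ 1) :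
    p.y N - p.y 0 + 4 * #p.downSteps ≤ 2 * N + 1 - ε := by
  calc p.y N - p.y 0 + 4 * #p.downSteps
      = ∑ r ∈ Icc 1 N, (p.y r - p.y (r - 1) + 4 * if p.y r - p.y (r - 1) < 0 then 1 else 0) := by
        rw [sum_add_distrib, sum_Icc_one_sub_pred, ← mul_sum, downSteps, card_filter]
        push_cast
        rfl
    _ ≤ ∑ r ∈ Icc 1 N, (2 + if r = N then 1 - ε else 0) :=
        sum_le_sum fun r hr => p.step_add_four_mul_ite_le hε hr
    _ ≤ 2 * N + 1 - ε := by
        rw [sum_add_distrib, sum_ite_eq']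
        simp only [sum_const, Nat.card_Icc, add_tsub_cancel_right, nsmul_eq_mul]
        split_ifs <;> linarith

end HalfPath

theorem stmt9_general (N : ℕ) (i : ℕ)
    (ε : ℝ) (hε : 0 < ε ∧ ε < 1 / 2) (k : ℤ)
    (a : HalfPath N ε (k - (2 * (N : ℤ) - 2 * (i : ℤ) - 1)))
    (abar : HalfPath N ε (k + (2 * (N : ℤ) - 2 * (i : ℤ) - 1)))
    (hjoin : abar.y N < a.y N) :
    Nat.card {r : ℕ // 1 ≤ r ∧ r ≤ N ∧ a.y r - a.y (r - 1) < 0} +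
      Nat.card {r : ℕ // 1 ≤ r ∧ r ≤ N ∧ 0 < abar.y r - abar.y (r - 1)} ≤ i := by
  rw [Nat.card_one_le_and_le_and_eq_card_filter, Nat.card_one_le_and_le_and_eq_card_filter]
  change #a.downSteps + #abar.upSteps ≤ i
  have hDown := a.sub_add_four_mul_card_downSteps_le (by linarith)
  have hUp := abar.reflect.sub_add_four_mul_card_downSteps_le (by linarith)
  rw [HalfPath.reflect_downSteps] at hUp
  simp only [HalfPath.reflect] at hUp
  have ha0 := a.h0
  have hb0 := abar.h0
  push_cast at ha0 hb0
  have hlt : (#a.downSteps + #abar.upSteps : ℝ) < i + 1 := by linarith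
  exact Nat.lt_succ_iff.mp (by exact_mod_cast hlt)

/-- Lemma 6.1 (second inequality): for a path `p ∈ 𝒫_{i,k}` with `i < N`, given by halves
`a ∈ 𝒫_{N,k-(2N-2i-1)}`, `ā ∈ 𝒫_{N,k+(2N-2i-1)}` joined with `a_N` strictly above `ā_N`,
one has `#S_p + #S̄_p ≤ i`. -/
theorem stmt9 (N : ℕ) (hN : 2 ≤ N) (i : ℕ) (hi1 : 1 ≤ i) (hiN : i < N)
    (ε : ℝ) (hε : 0 < ε ∧ ε < 1 / 2) (k : ℤ) (hk : Even k)
    (a : HalfPath N ε (k - (2 * (N : ℤ) - 2 * (i : ℤ) - 1)))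
    (abar : HalfPath N ε (k + (2 * (N : ℤ) - 2 * (i : ℤ) - 1)))
    (hjoin : abar.y N < a.y N) :
    Nat.card {r : ℕ // 1 ≤ r ∧ r ≤ N ∧ a.y r - a.y (r - 1) < 0} +
      Nat.card {r : ℕ // 1 ≤ r ∧ r ≤ N ∧ 0 < abar.y r - abar.y (r - 1)} ≤ i :=
  stmt9_general N i ε hε k a abar hjoin
end

section
/- Let N ≥ 2 and let (i_t, k_t), 1 ≤ t ≤ T, be an extended snake in X. Let 1 ≤ s < T. If k_{s+1} - k_s ≥ 4 + 2i_s + 2i_{s+1} - δ_{N i_s} - δ_{N i_{s+1}} and k_{s+1} - k_s ≡ 2(i_s - i_{s+1}) - δ_{N i_s} - δ_{N i_{s+1}} mod 4, then every path p ∈ P_{i_s, k_s} is strictly above every path p' ∈ P_{i_{s+1}, k_{s+1}}. -/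
/-- The set `X` for type B_N: `(N, k)` with `k` odd, or `(i, k)` with `1 ≤ i < N` and `k` even. -/
def inX (N i : ℕ) (k : ℤ) : Prop := (i = N ∧ Odd k) ∨ (1 ≤ i ∧ i < N ∧ Even k)

/-- Kronecker delta `δ_{iN}` as an integer. -/
def kd (N i : ℕ) : ℤ := if i = N then 1 else 0

/-- `(i', k')` is in snake position to `(i, k)` (condition (i)). -/
def SnakePos (N i : ℕ) (k : ℤ) (i' : ℕ) (k' : ℤ) : Prop :=
  k' - k ≥ 4 + 2 * |(i' : ℤ) - (i : ℤ)| - kd N i - kd N i' ∧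
  k' - k ≡ 2 * ((i' : ℤ) - (i : ℤ)) - kd N i - kd N i' [ZMOD 4]

/-- `(i', k')` is in extended snake position to `(i, k)`: condition (i) or (ii). -/
def ExtSnakePos (N i : ℕ) (k : ℤ) (i' : ℕ) (k' : ℤ) : Prop :=
  SnakePos N i k i' k' ∨
  k' - k ≥ 2 * (N : ℤ) + 2 + 2 * |(N : ℤ) - (i : ℤ) - (i' : ℤ)| - kd N i - kd N i'

/-- The horizontal coordinate of the `r`-th point of a path in `𝒫_{N,k}`:
`2r` (for `k ≡ 3 mod 4`) or `4N-2-2r` (for `k ≡ 1 mod 4`), with `x_N = 2N-1`. -/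
def xcoord (N : ℕ) (k : ℤ) (r : ℕ) : ℤ :=
  if r = N then 2 * N - 1
  else if k % 4 = 3 then 2 * r else 4 * N - 2 - 2 * r

/-- A path in `𝒫_{i,k}`: for `i = N` a single half path; for `i < N` a pair
`(a, ā)` with `a ∈ 𝒫_{N, k-(2N-2i-1)}`, `ā ∈ 𝒫_{N, k+(2N-2i-1)}` and
`a_N - ā_N = (0, y)` with `y > 0`. -/
inductive BPath (N : ℕ) (ε : ℝ) : ℕ → ℤ → Type where
  | top : (k : ℤ) → HalfPath N ε k → BPath N ε N k
  | pair : (i : ℕ) → (k : ℤ) → i < N →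
      (a : HalfPath N ε (k - (2 * (N : ℤ) - 2 * (i : ℤ) - 1))) →
      (b : HalfPath N ε (k + (2 * (N : ℤ) - 2 * (i : ℤ) - 1))) →
      b.y N < a.y N → BPath N ε i k

/-- The set of points of a path, as pairs (column, height). -/
def BPath.pts {N : ℕ} {ε : ℝ} : {i : ℕ} → {k : ℤ} → BPath N ε i k → Set (ℤ × ℝ)
  | _, _, .top k h => {pt | ∃ r : ℕ, r ≤ N ∧ pt = (xcoord N k r, h.y r)}
  | _, _, .pair i k _ a b _ => {pt | ∃ r : ℕ, r ≤ N ∧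
      (pt = (xcoord N (k - (2 * (N : ℤ) - 2 * (i : ℤ) - 1)) r, a.y r) ∨
       pt = (xcoord N (k + (2 * (N : ℤ) - 2 * (i : ℤ) - 1)) r, b.y r))}

/-- `p` is strictly above `p'`. -/
def StrictlyAbove {N : ℕ} {ε : ℝ} {i i' : ℕ} {k k' : ℤ}
    (p : BPath N ε i k) (p' : BPath N ε i' k') : Prop :=
  ∀ (x : ℤ) (y z : ℝ), (x, y) ∈ p.pts → (x, z) ∈ p'.pts → y < z

/-!
A half path in `𝒫_{N,m}` stays in the cone `|y_r - y_0| ≤ ρ(r)` around its start and in the cone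
`|y_N - y_r| ≤ ρ(N) - ρ(r)` around its end, where `ρ(r) = 2r` for `r < N` and `ρ(N) = 2N - 1 + ε`.
Hence every point of a path in `𝒫_{i,k}` lies below `k + 2i` plus a rising envelope `ρ(r)` or a
falling one `2ρ(N) - ρ(r)`, and every point of a path in `𝒫_{i',k'}` lies above `k' - 2i' - 2ε` plus
one of the two; the inequality on `k' - k` separates these base lines by more than `2ε`. Since the
rising envelope lies below the falling one, only the falling upper bound (on the upper half `ā` of
the first path) against the rising lower bound (on the lower half `a` of the second) could fail. The
congruence excludes it: these two half paths run in opposite directions, so they share only the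
middle column `2N - 1`, where the two envelopes meet.
-/

theorem abs_sub_le_sub_of_abs_succ_sub_le {f g : ℕ → ℝ} {n : ℕ}
    (h : ∀ j < n, |f (j + 1) - f j| ≤ g (j + 1) - g j) {r r' : ℕ} (hrr' : r ≤ r')
    (hr' : r' ≤ n) : |f r' - f r| ≤ g r' - g r :=
  calc |f r' - f r| = dist (f r) (f r') := by rw [Real.dist_eq, abs_sub_comm]
    _ ≤ ∑ j ∈ Finset.Ico r r', dist (f j) (f (j + 1)) := dist_le_Ico_sum_dist f hrr'
    _ ≤ ∑ j ∈ Finset.Ico r r', (g (j + 1) - g j) := Finset.sum_le_sum fun j hj => by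
      rw [Real.dist_eq, abs_sub_comm]
      exact h j (by rw [Finset.mem_Ico] at hj; omega)
    _ = g r' - g r := Finset.sum_Ico_sub g hrr'

namespace HalfPath

variable {N : ℕ} {ε : ℝ} {m : ℤ} {r r' : ℕ}

def reach (N : ℕ) (ε : ℝ) (r : ℕ) : ℝ := if r = N then 2 * N - 1 + ε else 2 * r

theorem reach_self : reach N ε N = 2 * N - 1 + ε := if_pos rfl

theorem reach_le_reach (hε : 0 ≤ 1 + ε) (hr : r ≤ N) : reach N ε r ≤ reach N ε N := by
  rw [reach_self, reach]
  split_ifs with hrN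
  · rfl
  · have : (r : ℝ) + 1 ≤ N := by exact_mod_cast (by omega : r + 1 ≤ N)
    linarith

theorem abs_succ_sub_le (h : HalfPath N ε m) (hε : 0 ≤ 1 + ε) {j : ℕ} (hj : j < N) :
    |h.y (j + 1) - h.y j| ≤ reach N ε (j + 1) - reach N ε j := by
  rcases (by omega : j + 1 < N ∨ j + 1 = N) with hj' | rfl
  · rw [reach, reach, if_neg hj'.ne, if_neg hj.ne, Nat.cast_succ,
      show (2 : ℝ) * (j + 1) - 2 * j = 2 by ring]
    rcases h.hstep j (by omega) with e | e <;> simp [e]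
  · rw [reach, reach, if_pos rfl, if_neg (by omega)]
    push_cast
    rcases h.hlast with e | e <;> rw [Nat.add_sub_cancel] at e <;> rw [e]
    · rw [abs_of_nonneg hε]; linarith
    · rw [abs_neg, abs_of_nonneg hε]; linarith

theorem abs_sub_le (h : HalfPath N ε m) (hε : 0 ≤ 1 + ε) (hrr' : r ≤ r') (hr' : r' ≤ N) :
    |h.y r' - h.y r| ≤ reach N ε r' - reach N ε r :=
  abs_sub_le_sub_of_abs_succ_sub_le (fun _ hj => h.abs_succ_sub_le hε hj) hrr' hr'

theorem abs_sub_start_le (h : HalfPath N ε m) (hN : N ≠ 0) (hε : 0 ≤ 1 + ε) (hr : r ≤ N) :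
    |h.y r - (m + 2 * N - 1)| ≤ reach N ε r := by
  have hreach : reach N ε 0 = 0 := by simp [reach, Ne.symm hN]
  simpa [h.h0, hreach] using h.abs_sub_le hε (Nat.zero_le r) hr

end HalfPath

open HalfPath

def envelope (N : ℕ) (ε : ℝ) (falling : Bool) (r : ℕ) : ℝ :=
  if falling then 2 * reach N ε N - reach N ε r else reach N ε r

theorem envelope_le_envelope {N r : ℕ} {ε : ℝ} {b b' : Bool} (hε : 0 ≤ 1 + ε) (hr : r ≤ N)
    (h : b = true → b' = false → r = N) : envelope N ε b r ≤ envelope N ε b' r := by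
  have := reach_le_reach hε hr
  cases b <;> cases b' <;> simp only [envelope, Bool.false_eq_true, if_true, if_false]
  · rfl
  · linarith
  · rw [h rfl rfl]; linarith
  · rfl

theorem eq_of_xcoord_eq {N r r' : ℕ} {m m' : ℤ} (hr : r ≤ N) (hr' : r' ≤ N)
    (h : xcoord N m r = xcoord N m' r') : r = r' := by
  unfold xcoord at h
  split_ifs at h <;> omega

theorem xcoord_ne_of_sub_modEq_two {N r : ℕ} {m m' : ℤ} (hr : r < N) (hm : Odd m)
    (h : m' - m ≡ 2 [ZMOD 4]) : xcoord N m r ≠ xcoord N m' r := by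
  obtain ⟨a, rfl⟩ := hm
  unfold xcoord Int.ModEq at *
  split_ifs <;> omega

theorem xcoord_ne_of_modEq {N i i' r : ℕ} {k k' : ℤ} (hi : i < N) (hi' : i' < N)
    (hX : inX N i k) (hX' : inX N i' k')
    (hcong : k' - k ≡ 2 * ((i : ℤ) - (i' : ℤ)) - kd N i - kd N i' [ZMOD 4]) (hr : r < N) :
    xcoord N (k + (2 * N - 2 * i - 1)) r ≠ xcoord N (k' - (2 * N - 2 * i' - 1)) r := by
  obtain ⟨a, rfl⟩ : Even k := by rcases hX with ⟨rfl, _⟩ | ⟨_, _, hk⟩ <;> [omega; exact hk]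
  obtain ⟨a', rfl⟩ : Even k' := by rcases hX' with ⟨rfl, _⟩ | ⟨_, _, hk⟩ <;> [omega; exact hk]
  rw [kd, kd, if_neg hi.ne, if_neg hi'.ne] at hcong
  refine xcoord_ne_of_sub_modEq_two hr ⟨a + N - i - 1, by ring⟩ ?_
  unfold Int.ModEq at *
  omega

theorem kd_le_one (N i : ℕ) : kd N i ≤ 1 := by
  unfold kd; split_ifs <;> norm_num

namespace BPath

variable {N i : ℕ} {ε : ℝ} {k : ℤ} {x : ℤ} {y : ℝ}

theorem exists_le_of_mem_pts (hN : N ≠ 0) (hε : 0 ≤ 1 + ε) (p : BPath N ε i k)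
    (hy : (x, y) ∈ p.pts) :
    ∃ (m : ℤ) (r : ℕ) (falling : Bool), r ≤ N ∧ x = xcoord N m r ∧
      y ≤ k + 2 * i + envelope N ε falling r ∧
      (falling = true → i < N ∧ m = k + (2 * N - 2 * i - 1)) := by
  cases p with
  | top k h =>
    obtain ⟨r, hr, hpt⟩ := hy
    obtain ⟨rfl, rfl⟩ := Prod.mk.inj hpt
    refine ⟨k, r, false, hr, rfl, ?_, by simp⟩
    have := abs_le.mp (h.abs_sub_start_le hN hε hr)
    simp only [envelope, Bool.false_eq_true, if_false]
    linarith
  | pair i k hi a b hab =>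
    obtain ⟨r, hr, hpt | hpt⟩ := hy <;> obtain ⟨rfl, rfl⟩ := Prod.mk.inj hpt
    · refine ⟨_, r, false, hr, rfl, ?_, by simp⟩
      have := abs_le.mp (a.abs_sub_start_le hN hε hr)
      simp only [envelope, Bool.false_eq_true, if_false]
      push_cast at this
      linarith
    · refine ⟨_, r, true, hr, rfl, ?_, fun _ => ⟨hi, rfl⟩⟩
      have hb := abs_le.mp (b.abs_sub_le hε hr le_rfl)
      have ha := abs_le.mp (a.abs_sub_start_le hN hε le_rfl)
      simp only [envelope, if_true]
      push_cast at ha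
      linarith

theorem exists_ge_of_mem_pts (hN : N ≠ 0) (hε : 0 ≤ 1 + ε) (p : BPath N ε i k)
    (hy : (x, y) ∈ p.pts) :
    ∃ (m : ℤ) (r : ℕ) (falling : Bool), r ≤ N ∧ x = xcoord N m r ∧
      k - 2 * i - 2 * ε + envelope N ε falling r ≤ y ∧
      (falling = false → i < N ∧ m = k - (2 * N - 2 * i - 1)) := by
  cases p with
  | top k h =>
    obtain ⟨r, hr, hpt⟩ := hy
    obtain ⟨rfl, rfl⟩ := Prod.mk.inj hpt
    refine ⟨k, r, true, hr, rfl, ?_, by simp⟩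
    have := abs_le.mp (h.abs_sub_start_le hN hε hr)
    simp only [envelope, if_true, reach_self]
    linarith
  | pair i k hi a b hab =>
    obtain ⟨r, hr, hpt | hpt⟩ := hy <;> obtain ⟨rfl, rfl⟩ := Prod.mk.inj hpt
    · refine ⟨_, r, false, hr, rfl, ?_, fun _ => ⟨hi, rfl⟩⟩
      have ha := abs_le.mp (a.abs_sub_le hε hr le_rfl)
      have hb := abs_le.mp (b.abs_sub_start_le hN hε le_rfl)
      simp only [envelope, Bool.false_eq_true, if_false]
      rw [reach_self] at ha hb
      push_cast at hb
      linarith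
    · refine ⟨_, r, true, hr, rfl, ?_, by simp⟩
      have := abs_le.mp (b.abs_sub_start_le hN hε hr)
      simp only [envelope, if_true, reach_self]
      push_cast at this
      linarith

theorem strictlyAbove {i' : ℕ} {k' : ℤ} (hN : N ≠ 0) (hε₀ : 0 ≤ 1 + ε) (hε₁ : ε < 1)
    (hX : inX N i k) (hX' : inX N i' k')
    (hineq : k' - k ≥ 4 + 2 * (i : ℤ) + 2 * (i' : ℤ) - kd N i - kd N i')
    (hcong : k' - k ≡ 2 * ((i : ℤ) - (i' : ℤ)) - kd N i - kd N i' [ZMOD 4])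
    (p : BPath N ε i k) (p' : BPath N ε i' k') : StrictlyAbove p p' := by
  intro x y z hy hz
  obtain ⟨m, r, b, hr, rfl, hy, hb⟩ := p.exists_le_of_mem_pts hN hε₀ hy
  obtain ⟨m', r', b', hr', hx, hz, hb'⟩ := p'.exists_ge_of_mem_pts hN hε₀ hz
  obtain rfl := eq_of_xcoord_eq hr hr' hx
  have hgap : (k : ℝ) + 2 * i + 2 ≤ k' - 2 * i' := by
    have : k + 2 * i + 2 ≤ k' - 2 * i' := by linarith [kd_le_one N i, kd_le_one N i']
    exact_mod_cast this
  have henv : envelope N ε b r ≤ envelope N ε b' r := by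
    refine envelope_le_envelope hε₀ hr fun hb₁ hb₂ => ?_
    by_contra hrN
    obtain ⟨hi, rfl⟩ := hb hb₁
    obtain ⟨hi', rfl⟩ := hb' hb₂
    exact xcoord_ne_of_modEq hi hi' hX hX' hcong (lt_of_le_of_ne hr hrN) hx
  linarith

end BPath

theorem stmt10_general (N : ℕ) (hN : 2 ≤ N) (ε : ℝ) (hε : 0 < ε ∧ ε < 1 / 2)
    (T : ℕ) (iseq : ℕ → ℕ) (kseq : ℕ → ℤ)
    (hX : ∀ t, 1 ≤ t → t ≤ T → inX N (iseq t) (kseq t))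
    (s : ℕ) (hs : 1 ≤ s) (hsT : s < T)
    (hineq : kseq (s + 1) - kseq s ≥
      4 + 2 * (iseq s : ℤ) + 2 * (iseq (s + 1) : ℤ) - kd N (iseq s) - kd N (iseq (s + 1)))
    (hcong : kseq (s + 1) - kseq s ≡
      2 * ((iseq s : ℤ) - (iseq (s + 1) : ℤ)) - kd N (iseq s) - kd N (iseq (s + 1)) [ZMOD 4])
    (p : BPath N ε (iseq s) (kseq s)) (p' : BPath N ε (iseq (s + 1)) (kseq (s + 1))) :
    StrictlyAbove p p' :=
  BPath.strictlyAbove (by omega) (by linarith) (by linarith) (hX s hs hsT.le)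
    (hX (s + 1) (by omega) hsT) hineq hcong p p'

theorem stmt10 (N : ℕ) (hN : 2 ≤ N) (ε : ℝ) (hε : 0 < ε ∧ ε < 1 / 2)
    (T : ℕ) (hT : 1 ≤ T) (iseq : ℕ → ℕ) (kseq : ℕ → ℤ)
    (hX : ∀ t, 1 ≤ t → t ≤ T → inX N (iseq t) (kseq t))
    (hsnake : ∀ t, 1 ≤ t → t + 1 ≤ T →
      ExtSnakePos N (iseq t) (kseq t) (iseq (t + 1)) (kseq (t + 1)))
    (s : ℕ) (hs : 1 ≤ s) (hsT : s < T)
    (hineq : kseq (s + 1) - kseq s ≥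
      4 + 2 * (iseq s : ℤ) + 2 * (iseq (s + 1) : ℤ) - kd N (iseq s) - kd N (iseq (s + 1)))
    (hcong : kseq (s + 1) - kseq s ≡
      2 * ((iseq s : ℤ) - (iseq (s + 1) : ℤ)) - kd N (iseq s) - kd N (iseq (s + 1)) [ZMOD 4])
    (p : BPath N ε (iseq s) (kseq s)) (p' : BPath N ε (iseq (s + 1)) (kseq (s + 1))) :
    StrictlyAbove p p' :=
  stmt10_general N hN ε hε T iseq kseq hX s hs hsT hineq hcong p p'
end

section
/- Let λ/μ be a non-generic super skew diagram (a super skew diagram with at least one column j such that #{i : (i,j) ∈ λ/μ and (i,j+1) ∈ λ/μ} = 2N). Define the closely-related diagram λ'/μ' by the surgery described below. Then λ'/μ' is again a super skew diagram, has exactly one fewer non-empty column than λ/μ, exactly 2N-1 fewer boxes, and exactly one fewer non-generic column. -/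
/-- The number of rows shared by columns `j` and `j+1` of `D`. -/
def sharedCard (D : Finset (ℤ × ℤ)) (j : ℤ) : ℕ :=
  (D.filter (fun b => b.2 = j ∧ (b.1, j + 1) ∈ D)).card

/-- A super skew diagram: adjacent columns share at most `2N` rows. -/
def IsSuper (N : ℕ) (D : Finset (ℤ × ℤ)) : Prop := ∀ j : ℤ, sharedCard D j ≤ 2 * N

/-- A generic (super) skew diagram: adjacent columns share fewer than `2N` rows. -/
def IsGeneric (N : ℕ) (D : Finset (ℤ × ℤ)) : Prop := ∀ j : ℤ, sharedCard D j < 2 * N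

/-- The set of row indices of the boxes in column `j`. -/
def col (D : Finset (ℤ × ℤ)) (j : ℤ) : Finset ℤ := (D.filter (fun b => b.2 = j)).image Prod.fst

/-- The top box `t_j` of column `j` (junk value `0` if the column is empty). -/
def topBox (D : Finset (ℤ × ℤ)) (j : ℤ) : ℤ := (col D j).min.untopD 0

/-- The length `l_j` of column `j`. -/
def colLen (D : Finset (ℤ × ℤ)) (j : ℤ) : ℕ := (col D j).card

/-- The closely-related diagram `λ'/μ'`:
`{(i,j) ∈ D : j ≤ j'} ∪ {(t_{j'} - r, j') : 1 ≤ r ≤ l_{j'+1} - 2N + 1}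
∪ {(i-1, j-1) : (i,j) ∈ D, j > j'+1}`. -/
def surgery (N : ℕ) (D : Finset (ℤ × ℤ)) (j' : ℤ) : Finset (ℤ × ℤ) :=
  (D.filter (fun b => b.2 ≤ j')) ∪
    ((Finset.Icc 1 (colLen D (j' + 1) - 2 * N + 1)).image
      (fun r : ℕ => (topBox D j' - (r : ℤ), j'))) ∪
    ((D.filter (fun b => j' + 1 < b.2)).image (fun b => (b.1 - 1, b.2 - 1)))

/-- The finset of non-generic columns of `D`. -/
def nonGenCols (N : ℕ) (D : Finset (ℤ × ℤ)) : Finset ℤ :=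
  (D.image Prod.snd).filter (fun j => sharedCard D j = 2 * N)

/-!
Columns of a skew diagram are intervals whose tops and bottoms move weakly up from left to
right. Hence the surgery is the same as sliding every column right of `j'` one step
diagonally up-left (`mergeCols`): the slid column `j' + 1`, spanning rows `s - 1, …, b' - 1`
for its top `s` and bottom `b'`, together with the old column `j'` fills exactly the rows
from `s - 1` down to the bottom of column `j'`. Sliding preserves convexity, keeps the
overlaps of adjacent columns left of `j'`, and shifts those right of `j'` by one index.
Exactly one column vanishes, and the boxes lost are those of column `j'` that collide with
the slid column `j' + 1`: the shared rows `i` of columns `j'`, `j' + 1` for which `i + 1` is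
shared too, i.e. all `2N` shared rows but the last.
-/

open Finset

section SkewDiagram

variable {D : Finset (ℤ × ℤ)}

lemma mem_col {i j : ℤ} : i ∈ col D j ↔ (i, j) ∈ D := by
  simp [col]

lemma isSkewDiagram_iff :
    IsSkewDiagram D ↔ (∀ p ∈ D, 1 ≤ p.2) ∧ (D.Nonempty → ∃ i : ℤ, (i, 1) ∈ D) ∧
      (D : Set (ℤ × ℤ)).OrdConnected := by
  refine and_congr_right fun _ => and_congr_right fun _ => ⟨fun h => ⟨?_⟩, fun h i j hij => ?_⟩
  · rintro ⟨a, c⟩ hac ⟨p, q⟩ hpq ⟨i, j⟩ ⟨⟨hai, hcj⟩, hip, hjq⟩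
    by_contra hij
    rcases h i j hij with h' | h'
    · exact h' p q hip hjq hpq
    · exact h' a c hai hcj hac
  · by_contra! ⟨⟨p, q, hip, hjq, hpq⟩, a, c, hai, hcj, hac⟩
    exact hij (h.out hac hpq ⟨⟨hai, hcj⟩, hip, hjq⟩)

lemma IsSkewDiagram.mem_of_le_of_le (hD : IsSkewDiagram D) {a c p q i j : ℤ}
    (hac : (a, c) ∈ D) (hpq : (p, q) ∈ D) (hai : a ≤ i) (hip : i ≤ p) (hcj : c ≤ j)
    (hjq : j ≤ q) : (i, j) ∈ D :=
  (isSkewDiagram_iff.1 hD).2.2.out hac hpq ⟨⟨hai, hcj⟩, hip, hjq⟩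

lemma IsSkewDiagram.col_eq_Icc (hD : IsSkewDiagram D) {j : ℤ} (h : (col D j).Nonempty) :
    col D j = Icc ((col D j).min' h) ((col D j).max' h) := by
  ext i
  refine ⟨fun hi => mem_Icc.2 ⟨min'_le _ _ hi, le_max' _ _ hi⟩, fun hi => mem_col.2 ?_⟩
  exact hD.mem_of_le_of_le (mem_col.1 (min'_mem _ h)) (mem_col.1 (max'_mem _ h))
    (mem_Icc.1 hi).1 (mem_Icc.1 hi).2 le_rfl le_rfl

lemma IsSkewDiagram.min'_col_le (hD : IsSkewDiagram D) {i j₁ j₂ : ℤ} (h : (col D j₂).Nonempty)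
    (hj : j₁ ≤ j₂) (hi : (i, j₁) ∈ D) : (col D j₂).min' h ≤ i := by
  by_contra! hlt
  have hm := mem_col.1 ((col D j₂).min'_mem h)
  exact hlt.not_ge (min'_le _ _ (mem_col.2 (hD.mem_of_le_of_le hi hm le_rfl hlt.le hj le_rfl)))

lemma IsSkewDiagram.le_max'_col (hD : IsSkewDiagram D) {i j₁ j₂ : ℤ} (h : (col D j₁).Nonempty)
    (hj : j₁ ≤ j₂) (hi : (i, j₂) ∈ D) : i ≤ (col D j₁).max' h := by
  by_contra! hlt
  have hm := mem_col.1 ((col D j₁).max'_mem h)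
  exact hlt.not_ge (le_max' _ _ (mem_col.2 (hD.mem_of_le_of_le hm hi hlt.le le_rfl le_rfl hj)))

lemma topBox_eq_min' {j : ℤ} (h : (col D j).Nonempty) : topBox D j = (col D j).min' h := by
  rw [topBox, ← coe_min' h]
  rfl

def sharedRows (D : Finset (ℤ × ℤ)) (j : ℤ) : Finset ℤ := col D j ∩ col D (j + 1)

lemma mem_sharedRows {i j : ℤ} : i ∈ sharedRows D j ↔ (i, j) ∈ D ∧ (i, j + 1) ∈ D := by
  rw [sharedRows, mem_inter, mem_col, mem_col]

lemma sharedCard_eq_card_sharedRows (D : Finset (ℤ × ℤ)) (j : ℤ) :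
    sharedCard D j = (sharedRows D j).card := by
  rw [sharedCard, ← card_image_of_injOn (f := Prod.fst)]
  · congr 1
    ext i
    simp [mem_sharedRows]
  · rintro ⟨a, b⟩ hab ⟨c, d⟩ hcd h
    simp_all

lemma exists_mem_of_sharedCard_pos {k : ℤ} (h : 0 < sharedCard D k) :
    ∃ i, (i, k) ∈ D ∧ (i, k + 1) ∈ D := by
  rw [sharedCard_eq_card_sharedRows, card_pos] at h
  obtain ⟨i, hi⟩ := h
  exact ⟨i, mem_sharedRows.1 hi⟩

lemma IsSkewDiagram.ordConnected_sharedRows (hD : IsSkewDiagram D) (j : ℤ) :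
    (sharedRows D j : Set ℤ).OrdConnected := by
  refine ⟨fun a ha p hp i hi => mem_sharedRows.2 ?_⟩
  have ha := mem_sharedRows.1 ha
  have hp := mem_sharedRows.1 hp
  exact ⟨hD.mem_of_le_of_le ha.1 hp.2 hi.1 hi.2 le_rfl (by omega),
    hD.mem_of_le_of_le ha.1 hp.2 hi.1 hi.2 (by omega) le_rfl⟩

end SkewDiagram

lemma card_filter_add_one_mem_add_one {S : Finset ℤ} (hS : (S : Set ℤ).OrdConnected)
    (hne : S.Nonempty) : (S.filter (· + 1 ∈ S)).card + 1 = S.card := by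
  have hmax : S.filter (· + 1 ∈ S) = S.erase (S.max' hne) := by
    ext i
    simp only [mem_filter, mem_erase]
    constructor
    · rintro ⟨hi, hi₁⟩
      exact ⟨((lt_add_one i).trans_le (le_max' _ _ hi₁)).ne, hi⟩
    · rintro ⟨hi_ne, hi⟩
      have hlt := (le_max' _ _ hi).lt_of_ne hi_ne
      exact ⟨hi, hS.out hi (max'_mem _ hne) ⟨by omega, by omega⟩⟩
  rw [hmax, card_erase_add_one (max'_mem _ _)]

lemma card_filter_le_add_card_filter_lt {α β : Type*} [LinearOrder β] (s : Finset α)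
    (f : α → β) (k : β) : (s.filter (f · ≤ k)).card + (s.filter (k < f ·)).card = s.card := by
  simpa only [not_le] using card_filter_add_card_filter_not (s := s) (fun a => f a ≤ k)

lemma mem_image_sub_one {s : Finset ℤ} {j : ℤ} : j ∈ s.image (· - 1) ↔ j + 1 ∈ s := by
  simp [mem_image, sub_eq_iff_eq_add]

lemma mem_image_sub_one_sub_one {E : Finset (ℤ × ℤ)} {i j : ℤ} :
    (i, j) ∈ E.image (fun b => (b.1 - 1, b.2 - 1)) ↔ (i + 1, j + 1) ∈ E := by
  simp [mem_image, sub_eq_iff_eq_add]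

def mergeCols (D : Finset (ℤ × ℤ)) (k : ℤ) : Finset (ℤ × ℤ) :=
  D.filter (fun b => b.2 ≤ k) ∪ (D.filter (fun b => k < b.2)).image (fun b => (b.1 - 1, b.2 - 1))

section mergeCols

variable {D : Finset (ℤ × ℤ)} {k : ℤ}

lemma mem_mergeCols {i j : ℤ} :
    (i, j) ∈ mergeCols D k ↔ j ≤ k ∧ (i, j) ∈ D ∨ k ≤ j ∧ (i + 1, j + 1) ∈ D := by
  rw [mergeCols, mem_union, mem_filter, mem_image_sub_one_sub_one, mem_filter, Int.lt_add_one_iff,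
    and_comm, and_comm (a := _ ∈ D)]

lemma IsSkewDiagram.mergeCols (hD : IsSkewDiagram D) (hpos : 0 < sharedCard D k) :
    IsSkewDiagram (mergeCols D k) := by
  obtain ⟨i₀, h₀, h₀'⟩ := exists_mem_of_sharedCard_pos hpos
  have hk : 1 ≤ k := hD.1 _ h₀
  refine isSkewDiagram_iff.2 ⟨?_, fun _ => ?_, ⟨?_⟩⟩
  · rintro ⟨i, j⟩ h
    rcases mem_mergeCols.1 h with ⟨-, h⟩ | ⟨hj, -⟩
    · exact hD.1 _ h
    · exact hk.trans hj
  · obtain ⟨i, hi⟩ := hD.2.1 ⟨_, h₀⟩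
    exact ⟨i, mem_mergeCols.2 (Or.inl ⟨hk, hi⟩)⟩
  · rintro ⟨a, c⟩ hac ⟨p, q⟩ hpq ⟨i, j⟩ ⟨⟨hai, hcj⟩, hip, hjq⟩
    simp only [mem_coe, mem_mergeCols] at hac hpq ⊢
    rcases hac with ⟨hc, hac⟩ | ⟨hc, hac⟩ <;> rcases hpq with ⟨hq, hpq⟩ | ⟨hq, hpq⟩
    · exact Or.inl ⟨by omega, hD.mem_of_le_of_le hac hpq hai hip hcj hjq⟩
    · rcases le_total j k with hj | hj
      · exact Or.inl ⟨hj, hD.mem_of_le_of_le hac hpq hai (by omega) hcj (by omega)⟩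
      · exact Or.inr ⟨hj, hD.mem_of_le_of_le hac hpq (by omega) (by omega) (by omega) (by omega)⟩
    -- here `c = j = q = k`, and the shared row `i₀` bridges the two pieces
    · rcases lt_or_ge i i₀ with hi | hi
      · exact Or.inr ⟨by omega, hD.mem_of_le_of_le hac h₀' (by omega) hi (by omega) (by omega)⟩
      · exact Or.inl ⟨by omega, hD.mem_of_le_of_le h₀ hpq hi hip (by omega) hjq⟩
    · exact Or.inr ⟨by omega, hD.mem_of_le_of_le hac hpq (by omega) (by omega) (by omega) (by omega)⟩

lemma sharedCard_mergeCols_of_lt (hD : IsSkewDiagram D) {j : ℤ} (hj : j < k) :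
    sharedCard (mergeCols D k) j = sharedCard D j := by
  rw [sharedCard_eq_card_sharedRows, sharedCard_eq_card_sharedRows]
  congr 1
  ext i
  simp only [mem_sharedRows, mem_mergeCols]
  constructor
  · rintro ⟨⟨-, h₁⟩ | ⟨hkj, -⟩, ⟨-, h₂⟩ | ⟨-, h₂⟩⟩
    · exact ⟨h₁, h₂⟩
    · exact ⟨h₁, hD.mem_of_le_of_le h₁ h₂ le_rfl (by omega) (by omega) (by omega)⟩
    all_goals omega
  · rintro ⟨h₁, h₂⟩
    exact ⟨Or.inl ⟨hj.le, h₁⟩, Or.inl ⟨hj, h₂⟩⟩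

lemma sharedCard_mergeCols_of_le (hD : IsSkewDiagram D) {j : ℤ} (hj : k ≤ j) :
    sharedCard (mergeCols D k) j = sharedCard D (j + 1) := by
  have key : ∀ i, i ∈ sharedRows (mergeCols D k) j ↔ i + 1 ∈ sharedRows D (j + 1) := by
    intro i
    simp only [mem_sharedRows, mem_mergeCols]
    constructor
    · rintro ⟨⟨-, h₁⟩ | ⟨-, h₁⟩, ⟨hjk, -⟩ | ⟨-, h₂⟩⟩
      · omega
      · exact ⟨hD.mem_of_le_of_le h₁ h₂ (by omega) le_rfl (by omega) (by omega), h₂⟩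
      · omega
      · exact ⟨h₁, h₂⟩
    · rintro ⟨h₁, h₂⟩
      exact ⟨Or.inr ⟨hj, h₁⟩, Or.inr ⟨by omega, h₂⟩⟩
  rw [sharedCard_eq_card_sharedRows, sharedCard_eq_card_sharedRows]
  exact card_nbij' (· + 1) (· - 1) (fun i hi => (key i).1 hi)
    (fun i hi => (key (i - 1)).2 (by simpa using hi)) (fun i _ => by simp) (fun i _ => by simp)

lemma image_snd_mergeCols : (mergeCols D k).image Prod.snd =
    (D.image Prod.snd).filter (· ≤ k) ∪ ((D.image Prod.snd).filter (k < ·)).image (· - 1) := by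
  ext j
  simp only [mem_union, mem_filter, mem_image_sub_one]
  simp only [mem_image, Prod.exists, exists_eq_right, mem_mergeCols]
  constructor
  · rintro ⟨i, ⟨hj, h⟩ | ⟨hj, h⟩⟩
    · exact Or.inl ⟨⟨i, h⟩, hj⟩
    · exact Or.inr ⟨⟨i + 1, h⟩, by omega⟩
  · rintro (⟨⟨i, h⟩, hj⟩ | ⟨⟨i, h⟩, hj⟩)
    · exact ⟨i, Or.inl ⟨hj, h⟩⟩
    · exact ⟨i - 1, Or.inr ⟨by omega, by simpa using h⟩⟩

lemma card_image_snd_mergeCols (hpos : 0 < sharedCard D k) :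
    ((mergeCols D k).image Prod.snd).card + 1 = (D.image Prod.snd).card := by
  obtain ⟨i₀, h₀, h₀'⟩ := exists_mem_of_sharedCard_pos hpos
  set C := D.image Prod.snd
  have hk : k ∈ C := mem_image.2 ⟨_, h₀, rfl⟩
  have hk' : k + 1 ∈ C := mem_image.2 ⟨_, h₀', rfl⟩
  have hinter : C.filter (· ≤ k) ∩ (C.filter (k < ·)).image (· - 1) = {k} := by
    ext j
    simp only [mem_inter, mem_filter, mem_image_sub_one, mem_singleton]
    constructor
    · rintro ⟨⟨-, hj⟩, -, hj'⟩
      omega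
    · rintro rfl
      exact ⟨⟨hk, le_rfl⟩, hk', by omega⟩
  have hunion := card_union_add_card_inter (C.filter (· ≤ k)) ((C.filter (k < ·)).image (· - 1))
  rw [hinter, card_singleton, card_image_of_injective _ (sub_left_injective (b := 1))] at hunion
  rw [image_snd_mergeCols, ← card_filter_le_add_card_filter_lt C id k]
  exact hunion

lemma card_mergeCols (hD : IsSkewDiagram D) (hpos : 0 < sharedCard D k) :
    (mergeCols D k).card + (sharedCard D k - 1) = D.card := by
  have hinter : D.filter (fun b => b.2 ≤ k) ∩
      (D.filter (fun b => k < b.2)).image (fun b => (b.1 - 1, b.2 - 1)) =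
      ((sharedRows D k).filter (· + 1 ∈ sharedRows D k)).image (·, k) := by
    ext ⟨i, j⟩
    rw [mem_inter, mem_filter, mem_image_sub_one_sub_one, mem_filter]
    simp only [mem_image, mem_filter, mem_sharedRows, Prod.mk.injEq]
    constructor
    · rintro ⟨⟨hi, hj⟩, hi', hj'⟩
      obtain rfl : j = k := by omega
      exact ⟨i, ⟨⟨hi, hD.mem_of_le_of_le hi hi' le_rfl (by omega) (by omega) le_rfl⟩,
        hD.mem_of_le_of_le hi hi' (by omega) le_rfl le_rfl (by omega), hi'⟩, rfl, rfl⟩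
    · rintro ⟨i, ⟨⟨hi, -⟩, -, hi'⟩, rfl, rfl⟩
      exact ⟨⟨hi, le_rfl⟩, hi', by omega⟩
  have hshift : ((D.filter (fun b => k < b.2)).image (fun b => (b.1 - 1, b.2 - 1))).card =
      (D.filter (fun b => k < b.2)).card :=
    card_image_of_injective _ fun _ _ h => by simpa [Prod.ext_iff] using h
  have hS := card_filter_add_one_mem_add_one (hD.ordConnected_sharedRows k)
    (card_pos.1 (by rwa [← sharedCard_eq_card_sharedRows]))
  rw [mergeCols, ← card_filter_le_add_card_filter_lt D Prod.snd k, ← hshift,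
    ← card_union_add_card_inter, hinter, card_image_of_injective _ fun _ _ h => (Prod.mk.inj h).1,
    sharedCard_eq_card_sharedRows]
  omega

lemma nonGenCols_mergeCols (hD : IsSkewDiagram D) {N : ℕ}
    (hmax : ∀ j, k < j → sharedCard D j < 2 * N) :
    nonGenCols N (mergeCols D k) = (nonGenCols N D).erase k := by
  ext j
  simp only [nonGenCols, mem_filter, mem_erase, image_snd_mergeCols, mem_union, mem_image_sub_one]
  rcases lt_or_ge j k with hj | hj
  · rw [sharedCard_mergeCols_of_lt hD hj]
    constructor
    · rintro ⟨⟨h, -⟩ | ⟨-, h⟩, hsh⟩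
      · exact ⟨hj.ne, h, hsh⟩
      · omega
    · rintro ⟨-, h, hsh⟩
      exact ⟨Or.inl ⟨h, hj.le⟩, hsh⟩
  · rw [sharedCard_mergeCols_of_le hD hj]
    have := hmax (j + 1) (by omega)
    constructor
    · rintro ⟨-, hsh⟩
      omega
    · rintro ⟨hjk, -, hsh⟩
      have := hmax j (by omega)
      omega

end mergeCols

lemma surgery_eq_mergeCols {N : ℕ} {D : Finset (ℤ × ℤ)} {k : ℤ} (hD : IsSkewDiagram D)
    (hng : sharedCard D k = 2 * N) (hpos : 0 < sharedCard D k) :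
    surgery N D k = mergeCols D k := by
  obtain ⟨i₀, h₀, h₀'⟩ := exists_mem_of_sharedCard_pos hpos
  have hc₀ : (col D k).Nonempty := ⟨i₀, mem_col.2 h₀⟩
  have hc₁ : (col D (k + 1)).Nonempty := ⟨i₀, mem_col.2 h₀'⟩
  set t := (col D k).min' hc₀
  set b := (col D k).max' hc₀
  set s := (col D (k + 1)).min' hc₁
  set b' := (col D (k + 1)).max' hc₁
  have hcol₀ (i : ℤ) : (i, k) ∈ D ↔ t ≤ i ∧ i ≤ b := by
    rw [← mem_col, hD.col_eq_Icc hc₀, mem_Icc]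
  have hcol₁ (i : ℤ) : (i, k + 1) ∈ D ↔ s ≤ i ∧ i ≤ b' := by
    rw [← mem_col, hD.col_eq_Icc hc₁, mem_Icc]
  have hst : s ≤ t := hD.min'_col_le hc₁ (by omega) (mem_col.1 (min'_mem _ hc₀))
  have hb'b : b' ≤ b := hD.le_max'_col hc₀ (by omega) (mem_col.1 (max'_mem _ hc₁))
  have htb' : t ≤ b' := ((hcol₀ i₀).1 h₀).1.trans ((hcol₁ i₀).1 h₀').2
  have hshared : sharedRows D k = Icc t b' := by
    ext i
    rw [mem_sharedRows, hcol₀, hcol₁, mem_Icc]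
    omega
  have h2N : (2 * N : ℤ) = b' + 1 - t := by
    rw [← Nat.cast_ofNat, ← Nat.cast_mul, ← hng, sharedCard_eq_card_sharedRows, hshared,
      Int.card_Icc]
    omega
  have hlen : (colLen D (k + 1) : ℤ) = b' + 1 - s := by
    rw [colLen, hD.col_eq_Icc hc₁, Int.card_Icc]
    omega
  have hadded (i : ℤ) : (∃ r ∈ Icc 1 (colLen D (k + 1) - 2 * N + 1), t - (r : ℤ) = i) ↔
      s - 1 ≤ i ∧ i ≤ t - 1 := by
    constructor
    · rintro ⟨r, hr, rfl⟩
      rw [mem_Icc] at hr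
      omega
    · rintro ⟨h₁, h₂⟩
      exact ⟨(t - i).toNat, mem_Icc.2 ⟨by omega, by omega⟩, by omega⟩
  ext ⟨i, j⟩
  rw [surgery, mem_union, mem_union, mem_image_sub_one_sub_one, mem_filter, mem_filter,
    mem_mergeCols, topBox_eq_min' hc₀]
  simp only [mem_image, Prod.mk.injEq]
  rcases lt_trichotomy j k with hj | rfl | hj
  · simp [hj.le, hj.ne', not_le.2 hj]
  · simp only [le_refl, and_true, true_and, lt_self_iff_false, and_false, or_false]
    rw [hadded, hcol₀, hcol₁]
    omega
  · simp [hj, hj.le, hj.ne, not_le.2 hj]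

theorem stmt16 (N : ℕ) (hN : 1 ≤ N) (D : Finset (ℤ × ℤ)) (hD : IsSkewDiagram D)
    (hsuper : IsSuper N D) (j' : ℤ) (hng : sharedCard D j' = 2 * N)
    (hmax : ∀ j : ℤ, j' < j → sharedCard D j < 2 * N) :
    IsSkewDiagram (surgery N D j') ∧ IsSuper N (surgery N D j') ∧
    ((surgery N D j').image Prod.snd).card + 1 = (D.image Prod.snd).card ∧
    (surgery N D j').card + (2 * N - 1) = D.card ∧
    (nonGenCols N (surgery N D j')).card + 1 = (nonGenCols N D).card := by
  have hpos : 0 < sharedCard D j' := by omega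
  obtain ⟨i₀, h₀, -⟩ := exists_mem_of_sharedCard_pos hpos
  have hj' : j' ∈ nonGenCols N D := mem_filter.2 ⟨mem_image.2 ⟨_, h₀, rfl⟩, hng⟩
  rw [surgery_eq_mergeCols hD hng hpos]
  refine ⟨hD.mergeCols hpos, fun j => ?_, card_image_snd_mergeCols hpos, ?_, ?_⟩
  · rcases lt_or_ge j j' with hj | hj
    · exact (sharedCard_mergeCols_of_lt hD hj).trans_le (hsuper j)
    · exact (sharedCard_mergeCols_of_le hD hj).trans_le (hmax _ (by omega)).le
  · rw [← hng]
    exact card_mergeCols hD hpos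
  · rw [nonGenCols_mergeCols hD hmax, card_erase_add_one hj']
end
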